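/- arXiv:1205.1682 — 4 statements merged into one kernel-verified Lean document; each statement's English description precedes it below -/
import Mathlib

section
/- For sets X, Y ∈ Ω*_n (i.e., X = S_n(X) and Y = S_n(Y)), the intersection X ∩ Y also satisfies X ∩ Y ∈ Ω*_n, i.e., S_n(X ∩ Y) = X ∩ Y. -/
/-- The set of nodes `u` such that every directed path from `u` to the sink `n`
(a nonempty list of vertices, consecutive ones joined by edges) visits a node of `B`. -/
def blockedBy {V : Type*} (E : V → V → Prop) (n : V) (B : Set V) : Set V :=
  {u | ∀ l : List V, l.Chain' E → l.head? = some u → l.getLast? = some n →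
        ∃ x ∈ l, x ∈ B}

section blockedBy

variable {V : Type*} (E : V → V → Prop) (n : V)

theorem blockedBy_mono {B B' : Set V} (h : B ⊆ B') : blockedBy E n B ⊆ blockedBy E n B' :=
  fun _ hu l hc hh hl ↦
    let ⟨x, hxl, hxB⟩ := hu l hc hh hl
    ⟨x, hxl, h hxB⟩

theorem subset_blockedBy (B : Set V) : B ⊆ blockedBy E n B :=
  fun u hu _ _ hh _ ↦ ⟨u, List.mem_of_mem_head? hh, hu⟩

end blockedBy

theorem blockedBy_inter_general {V : Type*} (E : V → V → Prop) (n : V) (X Y : Set V)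
    (hX : blockedBy E n X = X) (hY : blockedBy E n Y = Y) :
    blockedBy E n (X ∩ Y) = X ∩ Y := by
  have hXY : blockedBy E n (X ∩ Y) ⊆ X ∩ Y :=
    Set.subset_inter ((blockedBy_mono E n Set.inter_subset_left).trans hX.subset)
      ((blockedBy_mono E n Set.inter_subset_right).trans hY.subset)
  exact hXY.antisymm (subset_blockedBy E n _)

/-- `Ω*_n` is closed under intersection: if `S_n(X) = X` and `S_n(Y) = Y`
then `S_n(X ∩ Y) = X ∩ Y`. -/
theorem blockedBy_inter {V : Type*} [Fintype V] (E : V → V → Prop) (n : V) (X Y : Set V)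
    (hX : blockedBy E n X = X) (hY : blockedBy E n Y = Y) :
    blockedBy E n (X ∩ Y) = X ∩ Y :=
  blockedBy_inter_general E n X Y hX hY
end

section
/- Online bound for submodular maximization: let F : 2^V → ℝ be monotone submodular, Â ⊆ V any set, and for a ∈ V \ Â let δ_a = F(Â ∪ {a}) − F(Â). If a_1, …, a_k are the k elements of V \ Â with largest δ values (in decreasing order), then max_{|A| ≤ k} F(A) ≤ F(Â) + Σ_{i=1}^k δ_{a_i}. -/
/-!
By submodularity each element of `A` adds at most its marginal gain `δ` with respect to `Â`,
so `F A ≤ F (Â ∪ A) ≤ F Â + ∑_{b ∈ A} δ b`. The gains are nonnegative by monotonicity, vanish on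
`Â`, and every gain of an element of `A` outside `{a i}` is at most every `δ (a i)`; since
`|A| ≤ k`, there are no more such elements than elements of `{a i}` outside `A`, so the sum is
at most `∑ δ (a i)`.
-/

open Finset

namespace Finset

variable {ι M : Type*} [AddCommMonoid M] [LinearOrder M] [IsOrderedAddMonoid M]
  {s t : Finset ι} {f : ι → M}

theorem sum_le_sum_of_card_le_of_forall_le (hcard : #s ≤ #t)
    (hle : ∀ x ∈ s, ∀ y ∈ t, f x ≤ f y) (hf : ∀ y ∈ t, 0 ≤ f y) :
    ∑ x ∈ s, f x ≤ ∑ y ∈ t, f y := by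
  rcases t.eq_empty_or_nonempty with rfl | ht
  · rw [card_eq_zero.mp (Nat.le_zero.mp hcard)]
  obtain ⟨y₀, hy₀, hmin⟩ := t.exists_min_image f ht
  calc ∑ x ∈ s, f x ≤ #s • f y₀ := sum_le_card_nsmul _ _ _ fun x hx => hle x hx y₀ hy₀
    _ ≤ #t • f y₀ := nsmul_le_nsmul_left (hf y₀ hy₀) hcard
    _ ≤ ∑ y ∈ t, f y := card_nsmul_le_sum _ _ _ hmin

theorem sum_le_sum_of_card_le_of_forall_sdiff_le [DecidableEq ι] (hcard : #s ≤ #t)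
    (hle : ∀ x ∈ s \ t, ∀ y ∈ t, f x ≤ f y) (hf : ∀ y ∈ t, 0 ≤ f y) :
    ∑ x ∈ s, f x ≤ ∑ y ∈ t, f y := by
  have hsdiff : ∑ x ∈ s \ t, f x ≤ ∑ y ∈ t \ s, f y := by
    refine sum_le_sum_of_card_le_of_forall_le ?_
      (fun x hx y hy => hle x hx y (mem_sdiff.mp hy).1) (fun y hy => hf y (mem_sdiff.mp hy).1)
    have hs := card_inter_add_card_sdiff s t
    have ht := card_inter_add_card_sdiff t s
    rw [inter_comm] at ht
    omega
  rw [← sum_inter_add_sum_sdiff s t, ← sum_inter_add_sum_sdiff t s, inter_comm t s]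
  gcongr

end Finset

section SetFunction

variable {V : Type*} [DecidableEq V] (F : Finset V → ℝ)

theorem marginal_nonneg (hmono : Monotone F) (B : Finset V) (s : V) :
    0 ≤ F (insert s B) - F B :=
  sub_nonneg.mpr (hmono (subset_insert s B))

theorem le_add_sum_marginal
    (hsub : ∀ A B : Finset V, A ⊆ B → ∀ s ∉ B,
      F (insert s B) - F B ≤ F (insert s A) - F A)
    (B S : Finset V) :
    F (B ∪ S) ≤ F B + ∑ s ∈ S, (F (insert s B) - F B) := by
  induction S using Finset.induction_on with
  | empty => simp
  | @insert s S hsS ih =>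
    rw [sum_insert hsS, union_insert]
    by_cases hs : s ∈ B ∪ S
    · have hsB : s ∈ B := by simpa [hsS] using hs
      rw [insert_eq_of_mem hs, insert_eq_of_mem hsB]
      linarith
    · linarith [hsub B (B ∪ S) subset_union_left s hs]

end SetFunction

theorem online_bound_general {V : Type*} [DecidableEq V]
    (F : Finset V → ℝ)
    (hmono : ∀ A B : Finset V, A ⊆ B → F A ≤ F B)
    (hsub : ∀ A B : Finset V, A ⊆ B → ∀ s ∉ B,
      F (insert s B) - F B ≤ F (insert s A) - F A)
    (Ahat : Finset V) (k : ℕ) (a : Fin k → V)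
    (hinj : Function.Injective a)
    (hbest : ∀ b ∉ Ahat, (∀ i, b ≠ a i) →
      ∀ i, F (insert b Ahat) - F Ahat ≤ F (insert (a i) Ahat) - F Ahat)
    (A : Finset V) (hA : A.card ≤ k) :
    F A ≤ F Ahat + ∑ i, (F (insert (a i) Ahat) - F Ahat) := by
  set δ : V → ℝ := fun b => F (insert b Ahat) - F Ahat
  have hδ : ∀ b, 0 ≤ δ b := marginal_nonneg F (fun _ _ => hmono _ _) Ahat
  let T := univ.map ⟨a, hinj⟩
  have hle : ∀ x ∈ A \ T, ∀ y ∈ T, δ x ≤ δ y := by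
    intro x hx y hy
    obtain ⟨i, -, rfl⟩ := mem_map.mp hy
    by_cases hxA : x ∈ Ahat
    · simpa [δ, insert_eq_of_mem hxA] using hδ (a i)
    · exact hbest x hxA (fun j hj => (mem_sdiff.mp hx).2 (by simp [T, hj])) i
  calc F A ≤ F (Ahat ∪ A) := hmono _ _ subset_union_right
    _ ≤ F Ahat + ∑ b ∈ A, δ b := le_add_sum_marginal F hsub Ahat A
    _ ≤ F Ahat + ∑ b ∈ T, δ b := by
      gcongr F Ahat + ?_
      exact sum_le_sum_of_card_le_of_forall_sdiff_le (by simpa [T] using hA) hle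
        (fun y _ => hδ y)
    _ = F Ahat + ∑ i, δ (a i) := by rw [sum_map]; rfl

/-- Online bound for submodular maximization: for a monotone submodular `F`, any set `Â`
and `a_1, …, a_k` the `k` elements of `V \ Â` with largest marginal gains
`δ_a = F(Â ∪ {a}) − F(Â)` in decreasing order,
`max_{|A| ≤ k} F(A) ≤ F(Â) + Σ_i δ_{a_i}`. -/
theorem online_bound {V : Type*} [DecidableEq V] [Fintype V]
    (F : Finset V → ℝ)
    (hmono : ∀ A B : Finset V, A ⊆ B → F A ≤ F B)
    (hsub : ∀ A B : Finset V, A ⊆ B → ∀ s ∉ B,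
      F (insert s B) - F B ≤ F (insert s A) - F A)
    (Ahat : Finset V) (k : ℕ) (a : Fin k → V)
    (hinj : Function.Injective a) (hnot : ∀ i, a i ∉ Ahat)
    (hdec : ∀ i j : Fin k, i ≤ j →
      F (insert (a j) Ahat) - F Ahat ≤ F (insert (a i) Ahat) - F Ahat)
    (hbest : ∀ b ∉ Ahat, (∀ i, b ≠ a i) →
      ∀ i, F (insert b Ahat) - F Ahat ≤ F (insert (a i) Ahat) - F Ahat)
    (A : Finset V) (hA : A.card ≤ k) :
    F A ≤ F Ahat + ∑ i, (F (insert (a i) Ahat) - F Ahat) :=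
  online_bound_general F hmono hsub Ahat k a hinj hbest A hA
end

section
/- Greedy guarantee: if F : 2^V → ℝ≥0 is monotone submodular with F(∅) = 0, and A_k is the set produced by k steps of the greedy algorithm (each step adding an element of maximal marginal gain), then F(A_k) ≥ (1 − 1/e) · max_{|A| ≤ k} F(A). More precisely, F(A_k) ≥ (1 − (1 − 1/k)^k) OPT. -/
/-!
Write `gap i = F S - F (A i)`. By submodularity, `gap i` is at most the sum of the marginal gains
of the elements of `S` over `A i`, each of which the greedy choice dominates; as `#S ≤ k`, the
greedy step gains at least `gap i / k`. Hence `gap (i + 1) ≤ (1 - 1/k) · gap i`, so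
`gap k ≤ (1 - 1/k)^k · F S ≤ F S / e`.
-/

open Finset

section Submodular

variable {V : Type*} [DecidableEq V] {F : Finset V → ℝ}

theorem sub_le_sum_marginal_of_submodular
    (hsub : ∀ A B : Finset V, A ⊆ B → ∀ s ∉ B,
      F (insert s B) - F B ≤ F (insert s A) - F A)
    (B T : Finset V) : F (B ∪ T) - F B ≤ ∑ s ∈ T, (F (insert s B) - F B) := by
  induction T using Finset.induction_on with
  | empty => simp
  | insert a T haT ih =>
    rw [sum_insert haT, union_insert]
    by_cases haB : a ∈ B
    · rw [insert_eq_self.2 (mem_union_left T haB), insert_eq_self.2 haB]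
      linarith
    · have haBT : a ∉ B ∪ T := by simp [haB, haT]
      linarith [hsub B (B ∪ T) subset_union_left a haBT]

theorem sub_le_card_mul_greedy_gain
    (hmono : ∀ A B : Finset V, A ⊆ B → F A ≤ F B)
    (hsub : ∀ A B : Finset V, A ⊆ B → ∀ s ∉ B,
      F (insert s B) - F B ≤ F (insert s A) - F A)
    {B : Finset V} {a : V} (hbest : ∀ b ∉ B, F (insert b B) ≤ F (insert a B)) (S : Finset V) :
    F S - F B ≤ #S * (F (insert a B) - F B) := by
  have hgain : ∀ s ∈ S, F (insert s B) - F B ≤ F (insert a B) - F B := by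
    intro s _
    by_cases hsB : s ∈ B
    · rw [insert_eq_self.2 hsB, sub_self, sub_nonneg]
      exact hmono _ _ (subset_insert a B)
    · linarith [hbest s hsB]
  calc F S - F B ≤ F (B ∪ S) - F B := sub_le_sub_right (hmono S _ subset_union_right) _
    _ ≤ ∑ s ∈ S, (F (insert s B) - F B) := sub_le_sum_marginal_of_submodular hsub B S
    _ ≤ #S * (F (insert a B) - F B) := by
      simpa only [nsmul_eq_mul] using sum_le_card_nsmul S _ _ hgain

theorem greedy_gap_step
    (hmono : ∀ A B : Finset V, A ⊆ B → F A ≤ F B)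
    (hsub : ∀ A B : Finset V, A ⊆ B → ∀ s ∉ B,
      F (insert s B) - F B ≤ F (insert s A) - F A)
    {k : ℕ} (hk : 0 < k) {S B : Finset V} (hS : #S ≤ k) {a : V}
    (hbest : ∀ b ∉ B, F (insert b B) ≤ F (insert a B)) :
    F S - F (insert a B) ≤ (1 - 1 / (k : ℝ)) * (F S - F B) := by
  have hk' : (0 : ℝ) < k := by exact_mod_cast hk
  have hgain : 0 ≤ F (insert a B) - F B := sub_nonneg.2 (hmono _ _ (subset_insert a B))
  have hcard : F S - F B ≤ k * (F (insert a B) - F B) :=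
    (sub_le_card_mul_greedy_gain hmono hsub hbest S).trans
      (mul_le_mul_of_nonneg_right (by exact_mod_cast hS) hgain)
  have hdiv : (F S - F B) / k ≤ F (insert a B) - F B := by
    rwa [div_le_iff₀' hk']
  rw [sub_mul, one_mul, one_div_mul_eq_div]
  linarith

end Submodular

theorem one_sub_inv_pow_le_inv_exp {k : ℕ} (hk : 0 < k) :
    (1 - 1 / (k : ℝ)) ^ k ≤ 1 / Real.exp 1 := by
  rw [one_div (Real.exp 1), ← Real.exp_neg]
  exact Real.one_sub_div_pow_le_exp_neg (by exact_mod_cast hk)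

theorem greedy_guarantee_general {V : Type*} [DecidableEq V]
    (F : Finset V → ℝ)
    (hmono : ∀ A B : Finset V, A ⊆ B → F A ≤ F B)
    (hsub : ∀ A B : Finset V, A ⊆ B → ∀ s ∉ B,
      F (insert s B) - F B ≤ F (insert s A) - F A)
    (hempty : F ∅ = 0)
    (k : ℕ) (hk : 0 < k)
    (A : ℕ → Finset V) (hA0 : A 0 = ∅)
    (hgreedy : ∀ i < k, ∃ a ∉ A i, A (i + 1) = insert a (A i) ∧
      ∀ b ∉ A i, F (insert b (A i)) ≤ F (insert a (A i)))
    (S : Finset V) (hS : S.card ≤ k) :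
    (1 - (1 - 1 / (k : ℝ)) ^ k) * F S ≤ F (A k) ∧
    (1 - 1 / Real.exp 1) * F S ≤ F (A k) := by
  have hFS : 0 ≤ F S := hempty ▸ hmono ∅ S (empty_subset S)
  have hratio : 0 ≤ 1 - 1 / (k : ℝ) :=
    sub_nonneg.2 (div_le_one_of_le₀ (by exact_mod_cast hk) k.cast_nonneg)
  have hgap : F S - F (A k) ≤ (1 - 1 / (k : ℝ)) ^ k * F S := by
    have := le_geom (u := fun i ↦ F S - F (A i)) hratio k fun i hi ↦ by
      obtain ⟨a, -, hstep, hbest⟩ := hgreedy i hi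
      simpa only [hstep] using greedy_gap_step hmono hsub hk hS hbest
    simpa only [hA0, hempty, sub_zero] using this
  have hexp : (1 - 1 / (k : ℝ)) ^ k * F S ≤ 1 / Real.exp 1 * F S :=
    mul_le_mul_of_nonneg_right (one_sub_inv_pow_le_inv_exp hk) hFS
  constructor <;> linarith

/-- Greedy guarantee (Nemhauser–Wolsey–Fisher): for a monotone submodular `F` with
`F(∅) = 0`, the set `A k` produced by `k` greedy steps satisfies
`F(A k) ≥ (1 − (1 − 1/k)^k)·OPT ≥ (1 − 1/e)·OPT` where `OPT = max_{|A| ≤ k} F(A)`. -/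
theorem greedy_guarantee {V : Type*} [DecidableEq V] [Fintype V] [Nonempty V]
    (F : Finset V → ℝ)
    (hmono : ∀ A B : Finset V, A ⊆ B → F A ≤ F B)
    (hsub : ∀ A B : Finset V, A ⊆ B → ∀ s ∉ B,
      F (insert s B) - F B ≤ F (insert s A) - F A)
    (hempty : F ∅ = 0)
    (k : ℕ) (hk : 0 < k)
    (A : ℕ → Finset V) (hA0 : A 0 = ∅)
    (hgreedy : ∀ i < k, ∃ a ∉ A i, A (i + 1) = insert a (A i) ∧
      ∀ b ∉ A i, F (insert b (A i)) ≤ F (insert a (A i)))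
    (S : Finset V) (hS : S.card ≤ k) :
    (1 - (1 - 1 / (k : ℝ)) ^ k) * F S ≤ F (A k) ∧
    (1 - 1 / Real.exp 1) * F S ≤ F (A k) :=
  greedy_guarantee_general F hmono hsub hempty k hk A hA0 hgreedy S hS
end

section
/- In each greedy step applied to a monotone submodular function, the gain satisfies F(A_{i+1}) − F(A_i) ≥ (OPT − F(A_i)) / k, where OPT = max_{|A| ≤ k} F(A). -/
/-! By monotonicity and submodularity, `F S - F Aᵢ ≤ F (Aᵢ ∪ S) - F Aᵢ` is at most the sum of the
single-element gains `F (insert s Aᵢ) - F Aᵢ` over the at most `k` elements `s ∈ S \ Aᵢ`, and the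
greedy choice makes each of these at most the gain of `a`. -/

open Finset

theorem sub_le_sum_insert_sub_of_submodular {α : Type*} [DecidableEq α] (F : Finset α → ℝ)
    (hsub : ∀ A B : Finset α, A ⊆ B → ∀ s ∉ B,
      F (insert s B) - F B ≤ F (insert s A) - F A)
    (A T : Finset α) :
    F (A ∪ T) - F A ≤ ∑ s ∈ T \ A, (F (insert s A) - F A) := by
  induction T using Finset.induction_on with
  | empty => simp
  | @insert s T hsT ih =>
    by_cases hsA : s ∈ A
    · rwa [union_insert, insert_eq_of_mem (mem_union_left _ hsA), insert_sdiff_of_mem _ hsA]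
    · have hsAT : s ∉ A ∪ T := by simp [hsA, hsT]
      have hstep := hsub A (A ∪ T) subset_union_left s hsAT
      rw [union_insert, insert_sdiff_of_notMem _ hsA,
        sum_insert (by simp [hsT])]
      linarith

theorem greedy_step_gain_general {V : Type*} [DecidableEq V]
    (F : Finset V → ℝ)
    (hmono : ∀ A B : Finset V, A ⊆ B → F A ≤ F B)
    (hsub : ∀ A B : Finset V, A ⊆ B → ∀ s ∉ B,
      F (insert s B) - F B ≤ F (insert s A) - F A)
    (Ai : Finset V) (a : V)
    (hmax : ∀ b ∉ Ai, F (insert b Ai) ≤ F (insert a Ai))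
    (k : ℕ) (S : Finset V) (hS : S.card ≤ k) :
    (F S - F Ai) / (k : ℝ) ≤ F (insert a Ai) - F Ai := by
  set g := F (insert a Ai) - F Ai
  have hg : 0 ≤ g := sub_nonneg.mpr (hmono _ _ (subset_insert a Ai))
  have hcard : ((S \ Ai).card : ℝ) ≤ k := by
    exact_mod_cast (card_le_card sdiff_subset).trans hS
  have hsum : ∑ s ∈ S \ Ai, (F (insert s Ai) - F Ai) ≤ (S \ Ai).card • g :=
    sum_le_card_nsmul _ _ _ fun s hs ↦ sub_le_sub_right (hmax s (mem_sdiff.mp hs).2) _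
  refine div_le_of_le_mul₀ k.cast_nonneg hg ?_
  calc F S - F Ai ≤ F (Ai ∪ S) - F Ai := sub_le_sub_right (hmono _ _ subset_union_right) _
    _ ≤ (S \ Ai).card • g := (sub_le_sum_insert_sub_of_submodular F hsub Ai S).trans hsum
    _ ≤ g * k := by rw [nsmul_eq_mul, mul_comm]; gcongr

/-- Key inductive lemma of the greedy analysis: in each greedy step applied to a monotone
submodular function, the gain satisfies `F(A_{i+1}) − F(A_i) ≥ (OPT − F(A_i))/k`. -/
theorem greedy_step_gain {V : Type*} [DecidableEq V] [Fintype V]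
    (F : Finset V → ℝ)
    (hmono : ∀ A B : Finset V, A ⊆ B → F A ≤ F B)
    (hsub : ∀ A B : Finset V, A ⊆ B → ∀ s ∉ B,
      F (insert s B) - F B ≤ F (insert s A) - F A)
    (Ai : Finset V) (a : V) (ha : a ∉ Ai)
    (hmax : ∀ b ∉ Ai, F (insert b Ai) ≤ F (insert a Ai))
    (k : ℕ) (hk : 0 < k) (S : Finset V) (hS : S.card ≤ k) :
    (F S - F Ai) / (k : ℝ) ≤ F (insert a Ai) - F Ai :=
  greedy_step_gain_general F hmono hsub Ai a hmax k S hS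
end
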